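/- For every positive integer n and integer T with n < T ≤ 4n, there exist a ∈ ℤ_n and b ∈ ℤ_4 and an injective map from {0,1}^m into VT_n(a,b,T) where m = ⌊log₂ A(n,T)⌋ − ⌈log₂ n⌉ − 2 (assuming m ≥ 1); consequently there is an (n,T,B)-synthesis code of size 2^m, i.e., with redundancy at most 2n − ⌊log₂ A(n,T)⌋ + log₂ n + 2 bits. -/

import Mathlib

/-!
The `4n` pairs `(a, b) ∈ ℤ_n × ℤ_4` partition `W(n,T)` into the codes `VT_n(a,b,T)`, and
`2^(m + ⌈log₂ n⌉ + 2) ≤ A(n,T)` gives `4n · 2^m ≤ A(n,T)`. By pigeonhole some `VT_n(a,b,T)` has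
at least `2^m` words, and any `2^m` of them are the image of an injection of `{0,1}^m`.
-/

/-- A list of integers is quaternary if all entries lie in {1,2,3,4}. -/
def IsQ (x : List ℤ) : Prop := ∀ a ∈ x, 1 ≤ a ∧ a ≤ 4

/-- The alternating quaternary supersequence 1,2,3,4,1,2,3,4,... of length `T`. -/
def altSeq (T : ℕ) : List ℤ := (List.range T).map (fun i => ((i % 4 : ℕ) : ℤ) + 1)

/-- The synthesis time of `x`: the least `T` such that `x` is a subsequence of `altSeq T`. -/
noncomputable def synTime (x : List ℤ) : ℕ := sInf {T : ℕ | x.Sublist (altSeq T)}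

/-- The shifted modulo: the unique element of {1,2,3,4} congruent to `a` mod 4. -/
def mods4 (a : ℤ) : ℤ := (a - 1) % 4 + 1

/-- The differential word of `x`. -/
def diffWord (x : List ℤ) : List ℤ := List.zipWith (fun p c => mods4 (c - p)) (0 :: x) x

/-- The set of quaternary words of length `n` with synthesis time at most `T`. -/
def W (n : ℕ) (T : ℤ) : Set (List ℤ) :=
  {x | x.length = n ∧ IsQ x ∧ (synTime x : ℤ) ≤ T}

/-- `A n T` is the number of quaternary words of length `n` with synthesis time at most `T`. -/
noncomputable def A (n : ℕ) (T : ℤ) : ℕ := (W n T).ncard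

/-- The single-indel ball of `x`. -/
def ball (x : List ℤ) : Set (List ℤ) :=
  {y | y = x ∨ (y.length + 1 = x.length ∧ y.Sublist x) ∨
       (x.length + 1 = y.length ∧ IsQ y ∧ x.Sublist y)}

/-- The auxiliary binary sequence of `x` (as 0/1 naturals). -/
def auxSeq (x : List ℤ) : List ℕ :=
  List.zipWith (fun a b => if a ≤ b then 1 else 0) x x.tail

/-- VT syndrome of a binary word: `∑ i·w_i` with positions starting from 1. -/
def vtSyn (w : List ℕ) : ℕ := ∑ i ∈ Finset.range w.length, (i + 1) * w.getD i 0

/-- The quaternary VT code. -/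
def VTn (n : ℕ) (a : ZMod n) (b : ZMod 4) : Set (List ℤ) :=
  {x | x.length = n ∧ IsQ x ∧ ((vtSyn (auxSeq x) : ℕ) : ZMod n) = a ∧
       ((x.sum : ℤ) : ZMod 4) = b}

/-- The quaternary VT code with synthesis time constraint. -/
def VTnT (n : ℕ) (a : ZMod n) (b : ZMod 4) (T : ℤ) : Set (List ℤ) :=
  {x ∈ VTn n a b | (synTime x : ℤ) ≤ T}

lemma finite_isQ_length (n : ℕ) : {x : List ℤ | x.length = n ∧ IsQ x}.Finite := by
  refine ((List.finite_length_eq (Set.Icc (1 : ℤ) 4) n).image (List.map Subtype.val)).subset ?_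
  rintro x ⟨hlen, hq⟩
  lift x to List (Set.Icc (1 : ℤ) 4) using hq
  exact ⟨x, by simpa using hlen, rfl⟩

lemma W_finite (n : ℕ) (T : ℤ) : (W n T).Finite :=
  (finite_isQ_length n).subset fun _ hx => ⟨hx.1, hx.2.1⟩

lemma four_mul_mul_two_pow_le {N n m : ℕ} (h : m + Nat.clog 2 n + 2 ≤ Nat.log 2 N) :
    4 * n * 2 ^ m ≤ N := by
  have hN : N ≠ 0 := by
    rintro rfl
    simp at h
  calc 4 * n * 2 ^ m ≤ 4 * 2 ^ Nat.clog 2 n * 2 ^ m := by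
        gcongr
        exact Nat.le_pow_clog one_lt_two n
    _ = 2 ^ (m + Nat.clog 2 n + 2) := by ring
    _ ≤ N := Nat.pow_le_of_le_log hN h

lemma Finset.exists_embedding_into_fiber {α β γ : Type*} [Fintype β] [Nonempty β] [Fintype γ]
    (s : Finset α) (g : α → β) (h : Fintype.card β * Fintype.card γ ≤ s.card) :
    ∃ b : β, ∃ f : γ ↪ α, ∀ c, f c ∈ s ∧ g (f c) = b := by
  classical
  obtain ⟨b, -, hb⟩ := Finset.exists_le_card_fiber_of_mul_le_card_of_maps_to
    (fun x _ => Finset.mem_univ (g x)) Finset.univ_nonempty h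
  obtain ⟨e⟩ : Nonempty (γ ↪ {x // x ∈ s.filter (g · = b)}) :=
    Function.Embedding.nonempty_of_card_le (by simpa using hb)
  exact ⟨b, e.trans (Function.Embedding.subtype _), fun c => Finset.mem_filter.mp (e c).2⟩

theorem exists_direct_encoder_general (n : ℕ) (hn : 0 < n) (T : ℤ)
    (m : ℕ) (hm : m = Nat.log 2 (A n T) - Nat.clog 2 n - 2) (hm1 : 1 ≤ m) :
    ∃ a : ZMod n, ∃ b : ZMod 4,
      (∃ f : (Fin m → Bool) → List ℤ,
        Function.Injective f ∧ Set.range f ⊆ VTnT n a b T) ∧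
      ∃ C : Set (List ℤ), C ⊆ VTnT n a b T ∧ C.ncard = 2 ^ m := by
  have : NeZero n := ⟨hn.ne'⟩
  have hcard : Fintype.card (ZMod n × ZMod 4) * Fintype.card (Fin m → Bool)
      ≤ (W_finite n T).toFinset.card := by
    rw [← Set.ncard_eq_toFinset_card _ (W_finite n T)]
    simpa [A, ZMod.card, mul_comm n 4] using four_mul_mul_two_pow_le (N := A n T) (by omega)
  obtain ⟨⟨a, b⟩, f, hf⟩ := Finset.exists_embedding_into_fiber _
    (fun x => (((vtSyn (auxSeq x) : ℕ) : ZMod n), ((x.sum : ℤ) : ZMod 4))) hcard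
  have hrange : Set.range f ⊆ VTnT n a b T := by
    rintro _ ⟨c, rfl⟩
    obtain ⟨hW, hab⟩ := hf c
    obtain ⟨hlen, hq, hT⟩ := (W_finite n T).mem_toFinset.mp hW
    simp only [Prod.mk.injEq] at hab
    exact ⟨⟨hlen, hq, hab.1, hab.2⟩, hT⟩
  refine ⟨a, b, ⟨f, f.injective, hrange⟩, Set.range f, hrange, ?_⟩
  simp [Set.ncard_range_of_injective f.injective]

/-- the direct encoder. For `n < T ≤ 4n` and
`m = ⌊log₂ A(n,T)⌋ - ⌈log₂ n⌉ - 2 ≥ 1`, there are `a ∈ ℤ_n`, `b ∈ ℤ_4` and an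
injection from `{0,1}^m` into `VT_n(a,b,T)`; consequently there is an
`(n,T,B)`-synthesis code of size `2^m`. -/
theorem exists_direct_encoder (n : ℕ) (hn : 0 < n) (T : ℤ)
    (hT1 : (n : ℤ) < T) (hT2 : T ≤ 4 * n)
    (m : ℕ) (hm : m = Nat.log 2 (A n T) - Nat.clog 2 n - 2) (hm1 : 1 ≤ m) :
    ∃ a : ZMod n, ∃ b : ZMod 4,
      (∃ f : (Fin m → Bool) → List ℤ,
        Function.Injective f ∧ Set.range f ⊆ VTnT n a b T) ∧
      ∃ C : Set (List ℤ), C ⊆ VTnT n a b T ∧ C.ncard = 2 ^ m :=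
  exists_direct_encoder_general n hn T m hm hm1
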